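/- Let G be a group of exponent dividing 4, metabelian, and nilpotent of class at most 4, and let ∘ be the operation x ∘ y = xy(y,x)². Then the ∘-commutator coincides with the ordinary commutator: x⁻¹ ∘ y⁻¹ ∘ x ∘ y = (x,y) for all x, y ∈ G, where the ∘-inverse of x equals x⁻¹. -/

import Mathlib

/-! In Θ every commutator `⁅g, u⁆` with `u ∈ G'` has order dividing 2. Indeed, conjugation by
`g` acts on the abelian group `G'` as `1 + δ` with `δ u = ⁅g, u⁆` and, since the class is at most
4, `δ³ = 0`; expanding `(u g)⁴ = 1` therefore gives `u⁴ ⁅g, u⁆⁶ ⁅g, ⁅g, u⁆⁆⁴ = 1`, that is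
`⁅g, u⁆² = 1`. Hence squares of elements of `G'` are central.

Now the `∘`-products collapse: `x⁻¹ ∘ y⁻¹ = x⁻¹ y⁻¹ q²` with `q = (y⁻¹, x⁻¹)`, so `q²` is central;
the correction factor of the second product is the square of a conjugate of `q`, i.e. `q²` again,
and `q⁴ = 1`; the correction factor of the last product is the square of the commutator
`⁅(y, x), y⁆`, which is `1`. -/

/-- The commutator `(a,b) = a⁻¹ * b⁻¹ * a * b` used in the paper. -/
def paperComm {G : Type*} [Group G] (a b : G) : G := a⁻¹ * b⁻¹ * a * b

/-- The verbal operation `x ∘ y = x * y * (y,x)²`. -/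
def starOp {G : Type*} [Group G] (x y : G) : G := x * y * (paperComm y x) ^ 2

open Subgroup
open scoped commutatorElement

section

variable {G : Type*} [Group G]

theorem paperComm_eq_commutatorElement (a b : G) : paperComm a b = ⁅a⁻¹, b⁻¹⁆ := by
  rw [paperComm, commutatorElement_def, inv_inv, inv_inv]

theorem paperComm_mem_lowerCentralSeries_one (a b : G) :
    paperComm a b ∈ (⊤ : Subgroup G).lowerCentralSeries 1 := by
  rw [paperComm_eq_commutatorElement]
  exact commutator_mem_commutator (mem_top _) (mem_top _)

theorem commutatorElement_mem_lowerCentralSeries_succ {n : ℕ} {u : G}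
    (hu : u ∈ (⊤ : Subgroup G).lowerCentralSeries n) (g : G) :
    ⁅g, u⁆ ∈ (⊤ : Subgroup G).lowerCentralSeries (n + 1) := by
  rw [← commutatorElement_inv]
  exact inv_mem (commutator_mem_commutator hu (mem_top g))

theorem starOp_mul_left_of_mem_center {z : G} (hz : z ∈ center G) (a b : G) :
    starOp (a * z) b = starOp a b * z := by
  rw [mem_center_iff] at hz
  have hcomm : paperComm b (a * z) = paperComm b a := by
    calc paperComm b (a * z) = b⁻¹ * a⁻¹ * (z⁻¹ * b * z) * a := by rw [paperComm, hz a]; group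
      _ = paperComm b a := by rw [mul_assoc z⁻¹, hz b, inv_mul_cancel_left, paperComm]
  simp only [starOp, hcomm, mul_assoc, ← hz]

theorem mul_pow_four_eq_of_conj {u g d f : G} (hgu : g * u * g⁻¹ = d * u)
    (hgd : g * d * g⁻¹ = f * d) (hgf : Commute g f)
    (hud : Commute u d) (huf : Commute u f) (hdf : Commute d f) :
    (u * g) ^ 4 = u ^ 4 * d ^ 6 * f ^ 4 * g ^ 4 := by
  have hgf' : g * f * g⁻¹ = f := by rw [hgf.eq, mul_inv_cancel_right]
  have hconj : ∀ v w : G, g * (v * w) * g⁻¹ = (g * v * g⁻¹) * (g * w * g⁻¹) := fun v w => by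
    group
  have h2 : g * (g * u * g⁻¹) * g⁻¹ = f * d * (d * u) := by
    rw [hgu, hconj, hgd, hgu]
  have h3 : g * (g * (g * u * g⁻¹) * g⁻¹) * g⁻¹ = f * (f * d) * (f * d * (d * u)) := by
    rw [h2, hconj, hconj, hconj, hgf', hgd, hgu]
  have hexpand : (u * g) ^ 4 = u * (g * u * g⁻¹) * (g * (g * u * g⁻¹) * g⁻¹) *
      (g * (g * (g * u * g⁻¹) * g⁻¹) * g⁻¹) * g ^ 4 := by
    simp only [pow_succ, pow_zero, one_mul]; group
  rw [hexpand, h3, h2, hgu]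
  simp only [pow_succ, pow_zero, one_mul, mul_assoc, hud.symm.eq, hdf.symm.eq,
    hud.symm.left_comm, huf.symm.left_comm, hdf.symm.left_comm]

theorem commutatorElement_sq_eq_one_of_mem_lowerCentralSeries_one
    (hexp : ∀ x : G, x ^ 4 = 1)
    (hmet : ∀ a ∈ (⊤ : Subgroup G).lowerCentralSeries 1,
      ∀ b ∈ (⊤ : Subgroup G).lowerCentralSeries 1, a * b = b * a)
    (hnil : (⊤ : Subgroup G).lowerCentralSeries 4 = ⊥)
    {u : G} (hu : u ∈ (⊤ : Subgroup G).lowerCentralSeries 1) (g : G) : ⁅g, u⁆ ^ 2 = 1 := by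
  have hd : ⁅g, u⁆ ∈ (⊤ : Subgroup G).lowerCentralSeries 2 :=
    commutatorElement_mem_lowerCentralSeries_succ hu g
  have hf : ⁅g, ⁅g, u⁆⁆ ∈ (⊤ : Subgroup G).lowerCentralSeries 3 :=
    commutatorElement_mem_lowerCentralSeries_succ hd g
  have hgf : Commute g ⁅g, ⁅g, u⁆⁆ := by
    have h := commutatorElement_mem_lowerCentralSeries_succ hf g
    rwa [hnil, mem_bot, commutatorElement_eq_one_iff_commute] at h
  have hd₁ := Subgroup.lowerCentralSeries_antitone _ (by norm_num : 1 ≤ 2) hd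
  have hf₁ := Subgroup.lowerCentralSeries_antitone _ (by norm_num : 1 ≤ 3) hf
  have h6 : ⁅g, u⁆ ^ 6 = 1 := by
    have h := hexp (u * g)
    rwa [mul_pow_four_eq_of_conj (by group) (by group) hgf (hmet _ hu _ hd₁) (hmet _ hu _ hf₁)
      (hmet _ hd₁ _ hf₁), hexp, hexp, hexp, mul_one, one_mul, mul_one] at h
  calc ⁅g, u⁆ ^ 2 = ⁅g, u⁆ ^ 6 * (⁅g, u⁆ ^ 4)⁻¹ := by group
    _ = 1 := by rw [h6, hexp, inv_one, mul_one]

theorem sq_mem_center_of_mem_lowerCentralSeries_one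
    (hexp : ∀ x : G, x ^ 4 = 1)
    (hmet : ∀ a ∈ (⊤ : Subgroup G).lowerCentralSeries 1,
      ∀ b ∈ (⊤ : Subgroup G).lowerCentralSeries 1, a * b = b * a)
    (hnil : (⊤ : Subgroup G).lowerCentralSeries 4 = ⊥)
    {u : G} (hu : u ∈ (⊤ : Subgroup G).lowerCentralSeries 1) : u ^ 2 ∈ center G := by
  rw [mem_center_iff]
  intro g
  have hd₁ := Subgroup.lowerCentralSeries_antitone _ (by norm_num : 1 ≤ 2)
    (commutatorElement_mem_lowerCentralSeries_succ hu g)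
  have hconj : g * u ^ 2 * g⁻¹ = u ^ 2 := by
    rw [← conj_pow, show g * u * g⁻¹ = ⁅g, u⁆ * u by group, Commute.mul_pow (hmet _ hd₁ _ hu),
      commutatorElement_sq_eq_one_of_mem_lowerCentralSeries_one hexp hmet hnil hu, one_mul]
  exact mul_inv_eq_iff_eq_mul.mp hconj

end

/-- In the variety Θ, the `∘`-commutator `x⁻¹ ∘ y⁻¹ ∘ x ∘ y` equals the
ordinary commutator `(x,y)`. -/
theorem starOp_comm_eq_comm {G : Type*} [Group G]
    (hexp : ∀ x : G, x ^ 4 = 1)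
    (hmet : ∀ a ∈ (⊤ : Subgroup G).lowerCentralSeries 1, ∀ b ∈ (⊤ : Subgroup G).lowerCentralSeries 1, a * b = b * a)
    (hnil : (⊤ : Subgroup G).lowerCentralSeries 4 = ⊥) (x y : G) :
    starOp (starOp (starOp x⁻¹ y⁻¹) x) y = paperComm x y := by
  set q := paperComm y⁻¹ x⁻¹
  have hq : q ^ 2 ∈ center G := sq_mem_center_of_mem_lowerCentralSeries_one hexp hmet hnil
    (paperComm_mem_lowerCentralSeries_one y⁻¹ x⁻¹)
  have hstep₂ : starOp (starOp x⁻¹ y⁻¹) x = x⁻¹ * y⁻¹ * x := by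
    have hconj : paperComm x (x⁻¹ * y⁻¹) = x⁻¹ * q * x⁻¹⁻¹ := by
      simp only [q, paperComm]; group
    rw [show starOp x⁻¹ y⁻¹ = x⁻¹ * y⁻¹ * q ^ 2 from rfl, starOp_mul_left_of_mem_center hq,
      starOp, hconj, conj_pow, mem_center_iff.mp hq x⁻¹, mul_inv_cancel_right, mul_assoc,
      ← pow_add, hexp, mul_one]
  have hstep₃ : starOp (x⁻¹ * y⁻¹ * x) y = paperComm x y := by
    have hcomm : paperComm y (x⁻¹ * y⁻¹ * x) = ⁅paperComm y x, y⁆ := by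
      simp only [paperComm, commutatorElement_def]; group
    rw [starOp, hcomm, ← commutatorElement_inv, inv_pow,
      commutatorElement_sq_eq_one_of_mem_lowerCentralSeries_one hexp hmet hnil
        (paperComm_mem_lowerCentralSeries_one y x), inv_one, mul_one, paperComm]
  rw [hstep₂, hstep₃]
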